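/- arXiv:2001.06045 — 3 statements merged into one kernel-verified Lean document; each statement's English description precedes it below -/
import Mathlib

section
/- Let 0 < L < 2π and let φ : ℝ → ℝ be a C² function that is L-periodic and satisfies the stationary Allen–Cahn equation φ''(x) + φ(x) - φ(x)³ = 0 for all x ∈ ℝ. Then φ is constant, and its constant value belongs to {0, 1, -1}. -/
/-!
Write `u = φ'`, so that `u' = φ³ - φ`. Integrating `u' · u'` by parts over a period gives
`∫ u'² = -∫ (3φ² - 1) u² ≤ ∫ u²`. On the other hand `u` is periodic with mean zero, and its
Fourier coefficients are those of `u'` divided by `2πin / L`, so Parseval gives Wirtinger's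
inequality `∫ u² ≤ (L / 2π)² ∫ u'²`. For `L < 2π` the two inequalities force `∫ u² = 0`:
`φ` is constant, and a constant solution is a root of `c - c³`.
-/

open Real MeasureTheory Set

theorem Function.Periodic.deriv {𝕜 F : Type*} [NontriviallyNormedField 𝕜] [NormedAddCommGroup F]
    [NormedSpace 𝕜 F] {f : 𝕜 → F} {c : 𝕜} (h : Function.Periodic f c) :
    Function.Periodic (_root_.deriv f) c := fun x => by
  rw [← deriv_comp_add_const, h.funext]

theorem Function.Periodic.eq_zero_of_integral_sq_eq_zero {u : ℝ → ℝ} {T : ℝ}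
    (hu : Function.Periodic u T) (hT : 0 < T) (hc : Continuous u)
    (h : ∫ x in 0..T, u x ^ 2 = 0) (x : ℝ) : u x = 0 := by
  obtain ⟨y, hy, hxy⟩ := hu.exists_mem_Ico₀ hT x
  rw [hxy]
  by_contra hy0
  have := intervalIntegral.integral_pos (f := fun x => u x ^ 2) hT (hc.pow 2).continuousOn
    (fun _ _ => sq_nonneg _) ⟨y, Ico_subset_Icc_self hy, by positivity⟩
  linarith

theorem fourierCoeffOn_zero {a b : ℝ} (hab : a < b) (f : ℝ → ℂ) :
    fourierCoeffOn hab f 0 = (1 / (b - a)) • ∫ x in a..b, f x := by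
  simp [fourierCoeffOn_eq_integral]

theorem norm_fourierCoeffOn_le_of_hasDerivAt {a b : ℝ} (hab : a < b) {f f' : ℝ → ℂ}
    (hf : ∀ x ∈ uIcc a b, HasDerivAt f (f' x) x) (hf' : IntervalIntegrable f' volume a b)
    (hfab : f a = f b) {n : ℤ} (hn : n ≠ 0) :
    ‖fourierCoeffOn hab f n‖ ≤ (b - a) / (2 * π) * ‖fourierCoeffOn hab f' n‖ := by
  have hn1 : (1 : ℝ) ≤ |(n : ℝ)| := by exact_mod_cast Int.one_le_abs hn
  rw [fourierCoeffOn_of_hasDerivAt hab hn hf hf', hfab, sub_self, mul_zero, zero_sub]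
  have hba : 0 < b - a := sub_pos.2 hab
  calc _ = (b - a) / (2 * π * |(n : ℝ)|) * ‖fourierCoeffOn hab f' n‖ := by
        simp only [neg_mul, one_div, inv_neg, mul_inv_rev, Complex.inv_I, mul_neg, neg_neg,
          norm_neg, Complex.norm_mul, norm_inv, Complex.norm_intCast, Complex.norm_I,
          Complex.norm_real, norm_eq_abs, abs_of_pos pi_pos, Complex.norm_ofNat, one_mul]
        field_simp
        rw [← Complex.ofReal_sub, Complex.norm_real, Real.norm_of_nonneg hba.le, mul_comm]
    _ ≤ _ := by
        refine mul_le_mul_of_nonneg_right ?_ (norm_nonneg _)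
        exact div_le_div_of_nonneg_left hba.le two_pi_pos (le_mul_of_one_le_right two_pi_pos.le hn1)

theorem wirtinger_inequality {a b : ℝ} (hab : a < b) {f f' : ℝ → ℂ}
    (hf : ∀ x ∈ uIcc a b, HasDerivAt f (f' x) x) (hf' : MemLp f' 2 (volume.restrict (Ioc a b)))
    (hfab : f a = f b) (hmean : ∫ x in a..b, f x = 0) :
    ∫ x in a..b, ‖f x‖ ^ 2 ≤ ((b - a) / (2 * π)) ^ 2 * ∫ x in a..b, ‖f' x‖ ^ 2 := by
  have hcont : ContinuousOn f (Icc a b) := fun x hx =>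
    (hf x (Icc_subset_uIcc hx)).continuousAt.continuousWithinAt
  have hfL2 : MemLp f 2 (volume.restrict (Ioc a b)) :=
    (memLp_two_iff_integrable_sq_norm
      ((hcont.aestronglyMeasurable measurableSet_Icc).mono_set Ioc_subset_Icc_self)).2
      ((hcont.norm.pow 2).integrableOn_Icc.mono_set Ioc_subset_Icc_self)
  have hf'int : IntervalIntegrable f' volume a b :=
    (intervalIntegrable_iff_integrableOn_Ioc_of_le hab.le).2 (hf'.integrable one_le_two)
  have hcoeff (n : ℤ) : ‖fourierCoeffOn hab f n‖ ^ 2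
      ≤ ((b - a) / (2 * π)) ^ 2 * ‖fourierCoeffOn hab f' n‖ ^ 2 := by
    rcases eq_or_ne n 0 with rfl | hn
    · rw [fourierCoeffOn_zero, hmean, smul_zero, norm_zero, zero_pow two_ne_zero]
      positivity
    · rw [← mul_pow]
      gcongr
      exact norm_fourierCoeffOn_le_of_hasDerivAt hab hf hf'int hfab hn
  have := hasSum_le hcoeff (hasSum_sq_fourierCoeffOn hab hfL2)
    ((hasSum_sq_fourierCoeffOn hab hf').mul_left _)
  rwa [smul_eq_mul, smul_eq_mul, mul_left_comm,
    mul_le_mul_iff_right₀ (inv_pos.2 (sub_pos.2 hab))] at this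

theorem wirtinger_inequality_real {a b : ℝ} (hab : a < b) {u u' : ℝ → ℝ}
    (hu : ∀ x ∈ uIcc a b, HasDerivAt u (u' x) x) (hu' : MemLp u' 2 (volume.restrict (Ioc a b)))
    (huab : u a = u b) (hmean : ∫ x in a..b, u x = 0) :
    ∫ x in a..b, u x ^ 2 ≤ ((b - a) / (2 * π)) ^ 2 * ∫ x in a..b, u' x ^ 2 := by
  have := wirtinger_inequality hab (f := fun x => (u x : ℂ)) (f' := fun x => (u' x : ℂ))
    (fun x hx => (hu x hx).ofReal_comp) hu'.ofReal (by rw [huab])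
    (by rw [intervalIntegral.integral_ofReal, hmean, Complex.ofReal_zero])
  simpa only [Complex.norm_real, Real.norm_eq_abs, sq_abs] using this

theorem integral_sq_deriv_deriv_eq_neg_integral {φ F F' : ℝ → ℝ} {a b : ℝ}
    (hφ : ContDiff ℝ 2 φ) (hF : ∀ y, HasDerivAt F (F' y) y) (hF' : Continuous F')
    (heq : ∀ x, deriv (deriv φ) x = F (φ x)) (hφab : φ a = φ b)
    (hφ'ab : deriv φ a = deriv φ b) :
    ∫ x in a..b, deriv (deriv φ) x ^ 2 = -∫ x in a..b, F' (φ x) * deriv φ x ^ 2 := by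
  have hφ' : ∀ x, HasDerivAt φ (deriv φ x) x := fun x =>
    (hφ.differentiable two_ne_zero x).hasDerivAt
  have hu : ContDiff ℝ 1 (deriv φ) := hφ.deriv'
  have hu' : ∀ x, HasDerivAt (deriv φ) (F (φ x)) x := fun x =>
    heq x ▸ (hu.differentiable one_ne_zero x).hasDerivAt
  have hFφ : ∀ x, HasDerivAt (fun x => F (φ x)) (F' (φ x) * deriv φ x) x := fun x =>
    (hF (φ x)).comp x (hφ' x)
  have hparts := intervalIntegral.integral_mul_deriv_eq_deriv_mul
    (fun x _ => hFφ x) (fun x _ => hu' x)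
    (((hF'.comp hφ.continuous).mul hu.continuous).intervalIntegrable a b)
    (((hu.continuous_deriv le_rfl).congr heq).intervalIntegrable a b)
  rw [hφab, hφ'ab, sub_self, zero_sub] at hparts
  calc ∫ x in a..b, deriv (deriv φ) x ^ 2 = ∫ x in a..b, F (φ x) * F (φ x) := by
        simp only [heq, sq]
    _ = -∫ x in a..b, F' (φ x) * deriv φ x ^ 2 := by
        rw [hparts]
        congr 1
        simp only [sq, mul_assoc]

theorem integral_sq_deriv_deriv_le_integral_sq_deriv {φ F F' : ℝ → ℝ} {a b : ℝ} (hab : a ≤ b)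
    (hφ : ContDiff ℝ 2 φ) (hF : ∀ y, HasDerivAt F (F' y) y) (hF' : Continuous F')
    (hF'_lb : ∀ y, -1 ≤ F' y) (heq : ∀ x, deriv (deriv φ) x = F (φ x)) (hφab : φ a = φ b)
    (hφ'ab : deriv φ a = deriv φ b) :
    ∫ x in a..b, deriv (deriv φ) x ^ 2 ≤ ∫ x in a..b, deriv φ x ^ 2 := by
  have hu : Continuous (deriv φ) := hφ.continuous_deriv one_le_two
  rw [integral_sq_deriv_deriv_eq_neg_integral hφ hF hF' heq hφab hφ'ab,
    ← intervalIntegral.integral_neg]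
  refine intervalIntegral.integral_mono_on hab (Continuous.intervalIntegrable (by fun_prop) a b)
    ((hu.pow 2).intervalIntegrable a b) fun x _ => ?_
  nlinarith [hF'_lb (φ x), sq_nonneg (deriv φ x)]

theorem integral_sq_deriv_le_of_periodic {φ : ℝ → ℝ} {T : ℝ} (hT : 0 < T)
    (hφ : Function.Periodic φ T) (hφ2 : ContDiff ℝ 2 φ) :
    ∫ x in 0..T, deriv φ x ^ 2 ≤ (T / (2 * π)) ^ 2 * ∫ x in 0..T, deriv (deriv φ) x ^ 2 := by
  have hu : ContDiff ℝ 1 (deriv φ) := hφ2.deriv'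
  have hu' : Continuous (deriv (deriv φ)) := hu.continuous_deriv le_rfl
  have hmean : ∫ x in 0..T, deriv φ x = 0 := by
    rw [intervalIntegral.integral_deriv_eq_sub (fun x _ => hφ2.differentiable two_ne_zero x)
      (hu.continuous.intervalIntegrable 0 T), hφ.eq, sub_self]
  simpa only [sub_zero] using wirtinger_inequality_real hT
    (fun x _ => (hu.differentiable one_ne_zero x).hasDerivAt)
    ((memLp_two_iff_integrable_sq hu'.aestronglyMeasurable).2 (hu'.pow 2).integrableOn_Ioc)
    hφ.deriv.eq.symm hmean

/-- For `0 < L < 2π`, every `L`-periodic `C²` solution of the stationary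
Allen–Cahn equation `φ'' + φ - φ³ = 0` is constant, with value `0`, `1` or `-1`. -/
theorem stationary_allen_cahn_solutions (L : ℝ) (hL : 0 < L) (hL' : L < 2 * π)
    (φ : ℝ → ℝ) (hφ : ContDiff ℝ 2 φ) (hper : ∀ x, φ (x + L) = φ x)
    (heq : ∀ x, deriv (deriv φ) x + φ x - (φ x) ^ 3 = 0) :
    ∃ c : ℝ, (∀ x, φ x = c) ∧ (c = 0 ∨ c = 1 ∨ c = -1) := by
  have hperiodic : Function.Periodic φ L := hper
  have hφ'' (x : ℝ) : deriv (deriv φ) x = φ x ^ 3 - φ x := by linear_combination heq x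
  have henergy : ∫ x in 0..L, deriv (deriv φ) x ^ 2 ≤ ∫ x in 0..L, deriv φ x ^ 2 :=
    integral_sq_deriv_deriv_le_integral_sq_deriv (F' := fun y => 3 * y ^ 2 - 1) hL.le hφ
      (fun y => by simpa using (hasDerivAt_pow 3 y).sub (hasDerivAt_id y)) (by fun_prop)
      (fun y => by nlinarith [sq_nonneg y]) hφ'' hperiodic.eq.symm hperiodic.deriv.eq.symm
  have hwirtinger := integral_sq_deriv_le_of_periodic hL hperiodic hφ
  have hratio : (L / (2 * π)) ^ 2 < 1 := by
    rw [div_pow, div_lt_one (by positivity)]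
    nlinarith [pi_pos]
  have hsq_zero : ∫ x in 0..L, deriv φ x ^ 2 = 0 := by
    nlinarith [mul_le_mul_of_nonneg_left henergy (sq_nonneg (L / (2 * π))),
      intervalIntegral.integral_nonneg (μ := volume) hL.le fun x _ => sq_nonneg (deriv φ x)]
  have hu0 := hperiodic.deriv.eq_zero_of_integral_sq_eq_zero hL
    (hφ.continuous_deriv one_le_two) hsq_zero
  refine ⟨φ 0, fun x => is_const_of_deriv_eq_zero (hφ.differentiable two_ne_zero) hu0 x 0, ?_⟩
  have hroot : φ 0 * (φ 0 - 1) * (φ 0 + 1) = 0 := by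
    have := hφ'' 0
    rw [show deriv φ = 0 from funext hu0, deriv_zero, Pi.zero_apply] at this
    linear_combination -this
  simpa [sub_eq_zero, add_eq_zero_iff_eq_neg, or_assoc] using hroot
end

section
/- Let 0 < L < 2π. Then the infinite product over k ∈ ℤ of ( 1 + 3 / ( (2πk/L)² - 1 ) ) converges (the family is multipliable) and its value is ∏_{k ∈ ℤ} ( 1 + 3 / ( (2πk/L)² - 1 ) ) = - sinh²(L/√2) / sin²(L/2). -/
/-!
With `x = L / (2π)`, the factor at `k ≠ 0` is `(1 + 2x²/k²) / (1 - x²/k²)`, and it is even in `k`.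
Euler's product formula, at `x` and at the imaginary point `i√2 x`, gives the product over
`k ≥ 1` as `(sinh(L/√2) / (L/√2)) / (sin(L/2) / (L/2))`; squaring it for `±k` and multiplying by
the factor `-2` at `k = 0` yields `-sinh²(L/√2) / sin²(L/2)`.
-/

open Real Filter Finset Topology

theorem HasProd.of_nat_add_one_of_even {M : Type*} [CommMonoid M] [TopologicalSpace M]
    [ContinuousMul M] {f : ℤ → M} {m : M} (hf : ∀ k, f (-k) = f k)
    (h : HasProd (fun n : ℕ ↦ f (n + 1)) m) : HasProd f (m * f 0 * m) :=
  h.of_add_one_of_neg_add_one (h.congr_fun fun _ ↦ hf _)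

namespace Real

-- Euler's product for `sin` at `x i`, since `sin (y i) = sinh y * i`.
theorem tendsto_euler_sinh_prod (x : ℝ) :
    Tendsto (fun n : ℕ ↦ π * x * ∏ j ∈ range n, (1 + x ^ 2 / ((j : ℝ) + 1) ^ 2))
      atTop (𝓝 (sinh (π * x))) := by
  have h := (Complex.tendsto_euler_sin_prod (x * Complex.I)).div_const Complex.I
  rw [← tendsto_ofReal_iff]
  convert h using 1
  · ext n
    push_cast
    rw [mul_div_right_comm, ← mul_assoc, mul_div_cancel_right₀ _ Complex.I_ne_zero]
    congr 1
    refine prod_congr rfl fun j _ ↦ ?_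
    rw [mul_pow, Complex.I_sq]
    ring
  · rw [← mul_assoc, Complex.sin_mul_I, mul_div_cancel_right₀ _ Complex.I_ne_zero,
      Complex.ofReal_sinh, Complex.ofReal_mul]

theorem hasProd_of_tendsto_const_mul_prod {f : ℕ → ℝ} {c s : ℝ} (hc : c ≠ 0)
    (hf : Summable fun n ↦ f n - 1)
    (h : Tendsto (fun n ↦ c * ∏ i ∈ range n, f i) atTop (𝓝 s)) : HasProd f (s / c) := by
  have hmul : Multipliable f :=
    (Real.multipliable_one_add_of_summable hf).congr fun _ ↦ add_sub_cancel _ _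
  rw [hmul.hasProd_iff_tendsto_nat]
  exact (h.div_const c).congr fun _ ↦ mul_div_cancel_left₀ _ hc

theorem summable_sq_div_nat_add_one_sq (x : ℝ) :
    Summable fun n : ℕ ↦ x ^ 2 / ((n : ℝ) + 1) ^ 2 := by
  simpa using (summable_pow_div_add (x ^ 2) 2 1 one_lt_two).of_norm

theorem hasProd_euler_sin {x : ℝ} (hx : x ≠ 0) :
    HasProd (fun n : ℕ ↦ 1 - x ^ 2 / ((n : ℝ) + 1) ^ 2) (sin (π * x) / (π * x)) :=
  hasProd_of_tendsto_const_mul_prod (mul_ne_zero pi_ne_zero hx)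
    ((summable_sq_div_nat_add_one_sq x).neg.congr fun n ↦ by ring) (tendsto_euler_sin_prod x)

theorem hasProd_euler_sinh {x : ℝ} (hx : x ≠ 0) :
    HasProd (fun n : ℕ ↦ 1 + x ^ 2 / ((n : ℝ) + 1) ^ 2) (sinh (π * x) / (π * x)) :=
  hasProd_of_tendsto_const_mul_prod (mul_ne_zero pi_ne_zero hx)
    ((summable_sq_div_nat_add_one_sq x).congr fun n ↦ by ring) (tendsto_euler_sinh_prod x)

end Real

theorem one_add_three_div_sq_sub_one_eq_div {x y : ℝ} (hx : x ≠ 0) (hy : y ≠ 0)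
    (hxy : x ^ 2 ≠ y ^ 2) :
    1 + 3 / ((y / x) ^ 2 - 1) = (1 + (√2 * x) ^ 2 / y ^ 2) / (1 - x ^ 2 / y ^ 2) := by
  have hxy' : y ^ 2 - x ^ 2 ≠ 0 := sub_ne_zero.mpr hxy.symm
  rw [mul_pow, sq_sqrt zero_le_two]
  field_simp
  ring

/-- For `0 < L < 2π`, the Fredholm determinant
`det(1 + 3(-Δ-1)⁻¹) = ∏_{k ∈ ℤ} (1 + 3/((2πk/L)² - 1))` converges and equals
`- sinh²(L/√2) / sin²(L/2)`. -/
theorem fredholm_determinant_one_dim (L : ℝ) (hL : 0 < L) (hL' : L < 2 * π) :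
    Multipliable (fun k : ℤ => 1 + 3 / ((2 * π * k / L) ^ 2 - 1)) ∧
    ∏' k : ℤ, (1 + 3 / ((2 * π * k / L) ^ 2 - 1)) =
      - (Real.sinh (L / Real.sqrt 2)) ^ 2 / (Real.sin (L / 2)) ^ 2 := by
  set x := L / (2 * π) with hx
  have hx0 : 0 < x := by positivity
  have hx1 : x < 1 := (div_lt_one (by positivity)).mpr hL'
  have hfactor (n : ℕ) : 1 + 3 / ((2 * π * ((n + 1 : ℤ) : ℝ) / L) ^ 2 - 1) =
      (1 + (√2 * x) ^ 2 / ((n : ℝ) + 1) ^ 2) / (1 - x ^ 2 / ((n : ℝ) + 1) ^ 2) := by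
    have hn : (1 : ℝ) ≤ n + 1 := le_add_of_nonneg_left n.cast_nonneg
    rw [← one_add_three_div_sq_sub_one_eq_div hx0.ne' (by positivity) (by nlinarith)]
    congr 3
    rw [hx]
    field_simp
    push_cast
    ring
  have hpx : π * x = L / 2 := by rw [hx]; field_simp
  have hpsx : π * (√2 * x) = L / √2 := by
    rw [hx, eq_div_iff (by positivity)]
    field_simp
    rw [sq_sqrt zero_le_two]
  have hsin : 0 < sin (L / 2) := sin_pos_of_pos_of_lt_pi (by positivity) (by linarith)
  have hprod := HasProd.of_nat_add_one_of_even
    (f := fun k : ℤ ↦ 1 + 3 / ((2 * π * k / L) ^ 2 - 1))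
    (fun k ↦ by simp only [Int.cast_neg, mul_neg, neg_div, neg_sq])
    (((hasProd_euler_sinh (by positivity)).div₀ (hasProd_euler_sin hx0.ne')
      (by rw [hpx]; positivity)).congr_fun hfactor)
  refine ⟨hprod.multipliable, hprod.tprod_eq.trans ?_⟩
  have hf0 : (1 : ℝ) + 3 / ((2 * π * ((0 : ℤ) : ℝ) / L) ^ 2 - 1) = -2 := by norm_num
  rw [hpx, hpsx, hf0]
  field_simp
  rw [sq_sqrt zero_le_two]
end

section
/- Let 0 < L < 2π and for k = (k₁,k₂) ∈ ℤ² set λ_k = 3 / ( (2π/L)² (k₁² + k₂²) - 1 ). Then the infinite product ∏_{k ∈ ℤ²} ( 1 + λ_k ) e^{-λ_k} converges (the family ( (1 + λ_k) e^{-λ_k} )_{k ∈ ℤ²} is multipliable) and its value is nonzero. -/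
/-!
Write `(1 + λ) e^{-λ} = 1 + u` with `u = -e^{-λ} (e^λ - 1 - λ)`, so that `|u| ≤ e λ²` once
`|λ| ≤ 1`. Since `λ_k = O(‖k‖⁻²)` and `∑_{k ∈ ℤ²} ‖k‖⁻⁴ < ∞`, the `u_k` are absolutely summable,
and a product `∏ (1 + u_k)` with absolutely summable `u_k` converges, to a nonzero limit when
no factor vanishes. No factor does: `λ_k = -1` would force the denominator
`(2π/L)²|k|² - 1` to equal `-3`.
-/

open Real Filter

lemma abs_one_add_mul_exp_neg_sub_one_le {x : ℝ} (hx : |x| ≤ 1) :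
    |(1 + x) * exp (-x) - 1| ≤ exp 1 * x ^ 2 := by
  have hfactor : (1 + x) * exp (-x) - 1 = -(exp x - 1 - x) * exp (-x) := by
    rw [exp_neg]; field_simp; ring
  rw [hfactor, abs_mul, abs_neg, abs_of_pos (exp_pos _), mul_comm (exp 1)]
  exact mul_le_mul (abs_exp_sub_one_sub_id_le hx) (exp_le_exp.2 (neg_le.1 (abs_le.1 hx).1))
    (exp_pos _).le (sq_nonneg _)

section
variable {ι : Type*} {lam : ι → ℝ}

lemma summable_norm_one_add_mul_exp_neg_sub_one (hs : Summable fun i ↦ lam i ^ 2) :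
    Summable fun i ↦ ‖(1 + lam i) * exp (-lam i) - 1‖ := by
  refine (hs.mul_left (exp 1)).of_norm_bounded_eventually ?_
  filter_upwards [hs.tendsto_cofinite_zero.eventually_le_const zero_lt_one] with i hi
  rw [norm_norm]
  exact abs_one_add_mul_exp_neg_sub_one_le (sq_le_one_iff_abs_le_one _ |>.1 hi)

theorem multipliable_one_add_mul_exp_neg (hs : Summable fun i ↦ lam i ^ 2) :
    Multipliable fun i ↦ (1 + lam i) * exp (-lam i) := by
  simpa using multipliable_one_add_of_summable (summable_norm_one_add_mul_exp_neg_sub_one hs)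

theorem tprod_one_add_mul_exp_neg_ne_zero (hne : ∀ i, lam i ≠ -1)
    (hs : Summable fun i ↦ lam i ^ 2) :
    ∏' i, (1 + lam i) * exp (-lam i) ≠ 0 := by
  have hfactor_ne (i : ι) : 1 + ((1 + lam i) * exp (-lam i) - 1) ≠ 0 := by
    rw [add_sub_cancel]
    exact mul_ne_zero (fun h ↦ hne i (by linarith)) (exp_ne_zero _)
  simpa using tprod_one_add_ne_zero_of_summable hfactor_ne
    (summable_norm_one_add_mul_exp_neg_sub_one hs)

end

lemma summable_norm_prod_int_rpow {r : ℝ} (hr : 2 < r) :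
    Summable fun k : ℤ × ℤ ↦ ‖k‖ ^ (-r) := by
  refine (finTwoArrowEquiv ℤ).summable_iff.1 <|
    (EisensteinSeries.summable_one_div_norm_rpow hr).congr fun k ↦ ?_
  simp [EisensteinSeries.norm_eq_max_natAbs, Prod.norm_def, Int.norm_eq_abs]

lemma sq_norm_le_sq_add_sq (k : ℤ × ℤ) : ‖k‖ ^ 2 ≤ (k.1 : ℝ) ^ 2 + (k.2 : ℝ) ^ 2 := by
  rcases max_choice ‖k.1‖ ‖k.2‖ with h | h <;>
    rw [Prod.norm_def, h, Int.norm_eq_abs, sq_abs] <;>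
    linarith [sq_nonneg (k.1 : ℝ), sq_nonneg (k.2 : ℝ)]

lemma summable_sq_div_sq_add_sq_sub (a b : ℝ) {c : ℝ} (hc : 0 < c) :
    Summable fun k : ℤ × ℤ ↦ (a / (c * ((k.1 : ℝ) ^ 2 + (k.2 : ℝ) ^ 2) - b)) ^ 2 := by
  refine ((summable_norm_prod_int_rpow (r := 4) (by norm_num)).mul_left
    ((2 * a / c) ^ 2)).of_norm_bounded_eventually ?_
  have hnorm : Tendsto (fun k : ℤ × ℤ ↦ ‖k‖ ^ 2) cofinite atTop :=
    (tendsto_pow_atTop two_ne_zero).comp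
      (cocompact_eq_cofinite (ℤ × ℤ) ▸ tendsto_norm_cocompact_atTop)
  filter_upwards [hnorm.eventually_ge_atTop (max (2 * b / c) 1)] with k hk
  have hk1 : 1 ≤ ‖k‖ ^ 2 := le_of_max_le_right hk
  have hkb : 2 * b ≤ c * ‖k‖ ^ 2 := by
    have := le_of_max_le_left hk
    rwa [div_le_iff₀' hc] at this
  have hN := sq_norm_le_sq_add_sq k
  set N := (k.1 : ℝ) ^ 2 + (k.2 : ℝ) ^ 2
  have hden : c * ‖k‖ ^ 2 / 2 ≤ c * N - b := by nlinarith
  have hrpow : ‖k‖ ^ (-(4 : ℝ)) = ((‖k‖ ^ 2) ^ 2)⁻¹ := by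
    rw [rpow_neg (norm_nonneg k), ← pow_mul]; norm_cast
  rw [norm_pow, Real.norm_eq_abs, sq_abs, hrpow, div_pow, div_pow, mul_pow]
  calc a ^ 2 / (c * N - b) ^ 2 ≤ a ^ 2 / (c * ‖k‖ ^ 2 / 2) ^ 2 := by
        gcongr
    _ = 2 ^ 2 * a ^ 2 / c ^ 2 * ((‖k‖ ^ 2) ^ 2)⁻¹ := by
        field_simp

theorem carleman_fredholm_determinant_two_dim_general (L : ℝ) (hL : 0 < L)
    (lam : ℤ × ℤ → ℝ)
    (hlam : ∀ k : ℤ × ℤ,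
      lam k = 3 / ((2 * π / L) ^ 2 * ((k.1 : ℝ) ^ 2 + (k.2 : ℝ) ^ 2) - 1)) :
    Multipliable (fun k : ℤ × ℤ => (1 + lam k) * Real.exp (-lam k)) ∧
    (∏' k : ℤ × ℤ, (1 + lam k) * Real.exp (-lam k)) ≠ 0 := by
  have hsq : Summable fun k ↦ lam k ^ 2 := by
    have hc : 0 < (2 * π / L) ^ 2 := by positivity
    simpa only [hlam] using summable_sq_div_sq_add_sq_sub 3 1 hc
  have hne (k : ℤ × ℤ) : lam k ≠ -1 := by
    intro hk
    rw [hlam] at hk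
    set D := (2 * π / L) ^ 2 * ((k.1 : ℝ) ^ 2 + (k.2 : ℝ) ^ 2)
    have hD : 0 ≤ D := by positivity
    rcases eq_or_ne (D - 1) 0 with h | h
    · simp [h] at hk
    · rw [div_eq_iff h] at hk
      linarith
  exact ⟨multipliable_one_add_mul_exp_neg hsq, tprod_one_add_mul_exp_neg_ne_zero hne hsq⟩

/-- The Carleman–Fredholm regularized determinant
`det₂(1 + 3(-Δ-1)⁻¹) = ∏_{k ∈ ℤ²} (1 + λ_k) e^{-λ_k}` with
`λ_k = 3/((2π/L)²(k₁² + k₂²) - 1)` converges and is nonzero for `0 < L < 2π`. -/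
theorem carleman_fredholm_determinant_two_dim (L : ℝ) (hL : 0 < L) (hL' : L < 2 * π)
    (lam : ℤ × ℤ → ℝ)
    (hlam : ∀ k : ℤ × ℤ,
      lam k = 3 / ((2 * π / L) ^ 2 * ((k.1 : ℝ) ^ 2 + (k.2 : ℝ) ^ 2) - 1)) :
    Multipliable (fun k : ℤ × ℤ => (1 + lam k) * Real.exp (-lam k)) ∧
    (∏' k : ℤ × ℤ, (1 + lam k) * Real.exp (-lam k)) ≠ 0 :=
  carleman_fredholm_determinant_two_dim_general L hL lam hlam
end
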